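/- Let X be a monotone determined space. Then X has one-step closure if and only if X is d-meet continuous and has weak one-step closure. -/
import Mathlib


open Set Topology

universe u v

variable {X : Type u}

/-- The specialization order: `x ≤ y` iff `x` lies in the closure of `{y}`. -/
def sle [TopologicalSpace X] (x y : X) : Prop := x ∈ closure ({y} : Set X)

/-- `↑A` with respect to the specialization order. -/
def upSet [TopologicalSpace X] (A : Set X) : Set X := {x | ∃ a ∈ A, sle a x}

/-- `↓A` with respect to the specialization order. -/
def downSet [TopologicalSpace X] (A : Set X) : Set X := {x | ∃ a ∈ A, sle x a}

/-- A subset is directed: nonempty and any two elements have an upper bound in it. -/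
def DirSet [TopologicalSpace X] (D : Set X) : Prop :=
  D.Nonempty ∧ ∀ a ∈ D, ∀ b ∈ D, ∃ c ∈ D, sle a c ∧ sle b c

/-- `D →_τ x`: every open set containing `x` meets `D`. -/
def DConv [TopologicalSpace X] (D : Set X) (x : X) : Prop :=
  ∀ U : Set X, IsOpen U → x ∈ U → (D ∩ U).Nonempty

/-- Monotone determined open set. -/
def MDOpen [TopologicalSpace X] (U : Set X) : Prop :=
  ∀ D : Set X, DirSet D → ∀ x ∈ U, DConv D x → (D ∩ U).Nonempty

/-- Monotone determined space: every monotone determined open set is open. -/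
def MonDet (X : Type u) [TopologicalSpace X] : Prop :=
  ∀ U : Set X, MDOpen U → IsOpen U

/-- `x ≪_d y`. -/
def dwb [TopologicalSpace X] (x y : X) : Prop :=
  ∀ D : Set X, DirSet D → DConv D y → ∃ d ∈ D, sle x d

/-- `⇓_d x = {y | y ≪_d x}`. -/
def dDown [TopologicalSpace X] (x : X) : Set X := {y | dwb y x}

/-- `⇑_d x = {y | x ≪_d y}`. -/
def dUp [TopologicalSpace X] (x : X) : Set X := {y | dwb x y}

/-- c-space. -/
def CSpace (X : Type u) [TopologicalSpace X] : Prop :=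
  ∀ U : Set X, IsOpen U → ∀ y ∈ U, ∃ x : X, y ∈ interior (upSet {x}) ∧ upSet {x} ⊆ U

/-- Locally hypercompact space. -/
def LocallyHypercompact (X : Type u) [TopologicalSpace X] : Prop :=
  ∀ U : Set X, IsOpen U → ∀ x ∈ U, ∃ F : Set X, F.Finite ∧ F.Nonempty ∧
    x ∈ interior (upSet F) ∧ upSet F ⊆ U

/-- `A^{↓≪} = {x ∈ A : ⇓_d x ∩ A ≠ ∅}`. -/
def lowApprox [TopologicalSpace X] (A : Set X) : Set X :=
  {x | x ∈ A ∧ (dDown x ∩ A).Nonempty}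

/-- `A^{↑≪} = {x : ⇓_d x ⊆ ↓A}`. -/
def upApprox [TopologicalSpace X] (A : Set X) : Set X :=
  {x | dDown x ⊆ downSet A}

/-- `Ã = {x : ∃ directed D ⊆ ↓A ∩ ↓x with D →_τ x}`. -/
def tilde [TopologicalSpace X] (A : Set X) : Set X :=
  {x | ∃ D : Set X, DirSet D ∧ D ⊆ downSet A ∩ downSet {x} ∧ DConv D x}

/-- `Â = {x : ∃ directed D ⊆ ↓A with D →_τ x}`. -/
def hatSet [TopologicalSpace X] (A : Set X) : Set X :=
  {x | ∃ D : Set X, DirSet D ∧ D ⊆ downSet A ∧ DConv D x}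

/-- One-step closure. -/
def OneStepClosure (X : Type u) [TopologicalSpace X] : Prop :=
  ∀ A : Set X, tilde A = closure A

/-- Weak one-step closure. -/
def WeakOneStepClosure (X : Type u) [TopologicalSpace X] : Prop :=
  ∀ A : Set X, hatSet A = closure A

/-- d-meet continuous space. -/
def DMeetCont (X : Type u) [TopologicalSpace X] : Prop :=
  MonDet X ∧ ∀ (D : Set X) (x : X), DirSet D → DConv D x →
    x ∈ closure (downSet D ∩ downSet {x})

/-- An ideal on `J`: closed under subsets and finite unions. -/
def IsIdeal {J : Type v} (I : Set (Set J)) : Prop :=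
  (∀ A ∈ I, ∀ B : Set J, B ⊆ A → B ∈ I) ∧ ∀ A ∈ I, ∀ B ∈ I, A ∪ B ∈ I

/-- IS-convergence of a net with respect to an ideal. -/
def ISConv [TopologicalSpace X] {J : Type v} (xj : J → X) (I : Set (Set J)) (x : X) : Prop :=
  ∃ D : Set X, DirSet D ∧ DConv D x ∧ ∀ d ∈ D, {j | ¬ sle d (xj j)} ∈ I

/-- I-convergence of a net with respect to an (explicit) topology. -/
def IConvT {J : Type v} (t : TopologicalSpace X) (xj : J → X) (I : Set (Set J)) (x : X) : Prop :=
  ∀ U : Set X, t.IsOpen U → x ∈ U → {j | xj j ∉ U} ∈ I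

/-- ISL-convergence. -/
def ISLConv [TopologicalSpace X] {J : Type v} (xj : J → X) (I : Set (Set J)) (x : X) : Prop :=
  ISConv xj I x ∧ ∀ y : X, {j | ¬ sle y (xj j)} ∈ I → sle y x

/-- A directed family of nonempty finite subsets (Smyth preorder). -/
def DirFam [TopologicalSpace X] (F : Set (Set X)) : Prop :=
  (∀ G ∈ F, G.Finite ∧ G.Nonempty) ∧
  ∀ G1 ∈ F, ∀ G2 ∈ F, ∃ G ∈ F, G ⊆ upSet G1 ∩ upSet G2

/-- `ℱ →_τ x`: every open set containing `x` contains a member of `ℱ`. -/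
def FConv [TopologicalSpace X] (F : Set (Set X)) (x : X) : Prop :=
  ∀ U : Set X, IsOpen U → x ∈ U → ∃ G ∈ F, G ⊆ U

/-- IGS-convergence. -/
def IGSConv [TopologicalSpace X] {J : Type v} (xj : J → X) (I : Set (Set J)) (x : X) : Prop :=
  ∃ F : Set (Set X), DirFam F ∧ FConv F x ∧ ∀ G ∈ F, {j | xj j ∉ upSet G} ∈ I

/-- IGSL-convergence. -/
def IGSLConv [TopologicalSpace X] {J : Type v} (xj : J → X) (I : Set (Set J)) (x : X) : Prop :=
  IGSConv xj I x ∧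
    ∀ G : Set X, G.Finite → G.Nonempty → {j | xj j ∉ upSet G} ∈ I → x ∈ upSet G

/-- The Lawson topology: generated by the open sets of `τ` and complements of `↑y`. -/
def lawson (X : Type u) [TopologicalSpace X] : TopologicalSpace X :=
  TopologicalSpace.generateFrom {V | IsOpen V ∨ ∃ y : X, V = (upSet {y})ᶜ}

/-- The family `IS(X)`. -/
def memIS (X : Type u) [TopologicalSpace X] (U : Set X) : Prop :=
  ∀ (J : Type u) [Preorder J], Nonempty J → (∀ a b : J, ∃ c, a ≤ c ∧ b ≤ c) →
    ∀ (xj : J → X) (I : Set (Set J)), IsIdeal I →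
      ∀ x ∈ U, ISConv xj I x → {j | xj j ∉ U} ∈ I

/-- The family `IGS(X)`. -/
def memIGS (X : Type u) [TopologicalSpace X] (U : Set X) : Prop :=
  ∀ (J : Type u) [Preorder J], Nonempty J → (∀ a b : J, ∃ c, a ≤ c ∧ b ≤ c) →
    ∀ (xj : J → X) (I : Set (Set J)), IsIdeal I →
      ∀ x ∈ U, IGSConv xj I x → {j | xj j ∉ U} ∈ I

lemma sle_refl' [TopologicalSpace X] (x : X) : sle x x := subset_closure rfl

lemma sle_trans' [TopologicalSpace X] {x y z : X} (h1 : sle x y) (h2 : sle y z) : sle x z :=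
  closure_minimal (Set.singleton_subset_iff.2 h2) isClosed_closure h1

lemma hat_sub_closure [TopologicalSpace X] (A : Set X) : hatSet A ⊆ closure A := by
  rintro x ⟨D, _, hDA, hconv⟩
  rw [mem_closure_iff]
  intro U hU hxU
  obtain ⟨d, hdD, hdU⟩ := hconv U hU hxU
  obtain ⟨a, haA, hda⟩ := hDA hdD
  obtain ⟨b, hbU, hb⟩ := mem_closure_iff.1 hda U hU hdU
  exact ⟨b, hbU, hb ▸ haA⟩

lemma downSet_downSet [TopologicalSpace X] (A : Set X) : downSet (downSet A) ⊆ downSet A := by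
  rintro x ⟨y, ⟨a, haA, hya⟩, hxy⟩
  exact ⟨a, haA, sle_trans' hxy hya⟩

lemma dconv_mem_closure [TopologicalSpace X] {D : Set X} {x : X} (h : DConv D x) :
    x ∈ closure D := by
  rw [mem_closure_iff]
  intro U hU hxU
  obtain ⟨d, hdD, hdU⟩ := h U hU hxU
  exact ⟨d, hdU, hdD⟩

/-- A monotone determined space has one-step closure iff it is
d-meet continuous and has weak one-step closure. -/
theorem stmt_10 [TopologicalSpace X] [T0Space X] (hX : MonDet X) :
    OneStepClosure X ↔ (DMeetCont X ∧ WeakOneStepClosure X) := by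
  constructor
  · intro hosc
    have hwosc : WeakOneStepClosure X := by
      intro A
      apply Set.Subset.antisymm (hat_sub_closure A)
      rw [← hosc A]
      rintro x ⟨D, hD, hDA, hconv⟩
      exact ⟨D, hD, fun d hd => (hDA hd).1, hconv⟩
    refine ⟨⟨hX, fun D x hD hconv => ?_⟩, hwosc⟩
    have hx : x ∈ closure D := dconv_mem_closure hconv
    rw [← hosc D] at hx
    obtain ⟨E, hE, hED, hEconv⟩ := hx
    have : closure E ⊆ closure (downSet D ∩ downSet {x}) :=
      closure_mono hED
    exact this (dconv_mem_closure hEconv)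
  · rintro ⟨⟨_, hdmc⟩, hwosc⟩ A
    apply Set.Subset.antisymm
    · rintro x ⟨D, hD, hDA, hconv⟩
      exact hat_sub_closure A ⟨D, hD, fun d hd => (hDA hd).1, hconv⟩
    · intro x hx
      rw [← hwosc A] at hx
      obtain ⟨D, hD, hDA, hconv⟩ := hx
      have hx2 : x ∈ closure (downSet D ∩ downSet {x}) := hdmc D x hD hconv
      rw [← hwosc _] at hx2
      obtain ⟨E, hE, hEsub, hEconv⟩ := hx2
      refine ⟨E, hE, ?_, hEconv⟩
      intro e he
      obtain ⟨y, ⟨hyD, hyx⟩, hey⟩ := hEsub he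
      have heD : e ∈ downSet D := downSet_downSet D ⟨y, hyD, hey⟩
      obtain ⟨d, hdD, hed⟩ := heD
      obtain ⟨a, haA, hda⟩ := hDA hdD
      obtain ⟨z, hz, hyz⟩ := hyx
      exact ⟨⟨a, haA, sle_trans' hed hda⟩,
        ⟨z, hz, sle_trans' hey hyz⟩⟩
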